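/- arXiv:2006.03932 — 3 statements merged into one kernel-verified Lean document; each statement's English description precedes it below -/
import Mathlib

section
/- Let ε_n, ψ ∈ ℝᵖ, ε_o ∈ ℝᵐ, and let A_n be a real p×p matrix, A_no a real p×m matrix, and Q_n, S_n, R_n real p×p matrices. Assume: (i) the block matrix [[−R_n, −S_nᵀ],[−S_n, −Q_n]] − [[A_n + A_nᵀ + κ_n I, I],[I, 0]] is positive semidefinite (i.e. the system Σ(A_n, I, I) is (−R_n, −S_nᵀ, −Q_n)-ssd(κ_n)); and (ii) ψᵀQ_nψ + 2ψᵀS_nε_n + ε_nᵀR_nε_n ≥ 0 (static (Q_n,S_n,R_n)-dissipativity of ψ against ε_n). Then ε_nᵀ(A_n + A_nᵀ)ε_n + 2ε_nᵀψ + 2ε_nᵀ(A_no ε_o) ≤ −κ_n‖ε_n‖² + 2ε_nᵀ(A_no ε_o). -/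
open Matrix

/-!
Evaluating the positive semidefinite ssd block matrix at the stacked vector `(ε_n, ψ)` gives
`ε_nᵀ(A_n + A_nᵀ + κ_n I)ε_n + 2ε_nᵀψ ≤ -(ψᵀQ_nψ + 2ψᵀS_nε_n + ε_nᵀR_nε_n)`, and the right-hand
side is nonpositive by the static dissipativity of `ψ`.
-/

theorem sumElim_dotProduct_fromBlocks_mulVec_sumElim {m n R : Type*} [Fintype m] [Fintype n]
    [NonUnitalNonAssocSemiring R] (A : Matrix m m R) (B : Matrix m n R) (C : Matrix n m R) (D : Matrix n n R)
    (x : m → R) (y : n → R) :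
    Sum.elim x y ⬝ᵥ (fromBlocks A B C D *ᵥ Sum.elim x y) =
      x ⬝ᵥ (A *ᵥ x) + x ⬝ᵥ (B *ᵥ y) + (y ⬝ᵥ (C *ᵥ x) + y ⬝ᵥ (D *ᵥ y)) := by
  simp only [fromBlocks_mulVec, Sum.elim_comp_inl, Sum.elim_comp_inr,
    sumElim_dotProduct_sumElim, dotProduct_add]

theorem ssd_supply_rate_le {n : Type*} [Fintype n] [DecidableEq n]
    {A Q S R : Matrix n n ℝ} {κ : ℝ}
    (hssd : (fromBlocks (-R) (-Sᵀ) (-S) (-Q) - fromBlocks (A + Aᵀ + κ • 1) 1 1 0).PosSemidef)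
    (x y : n → ℝ) :
    x ⬝ᵥ ((A + Aᵀ) *ᵥ x) + 2 * (x ⬝ᵥ y) ≤
      -κ * (x ⬝ᵥ x) - (y ⬝ᵥ (Q *ᵥ y) + 2 * (y ⬝ᵥ (S *ᵥ x)) + x ⬝ᵥ (R *ᵥ x)) := by
  have hform := hssd.dotProduct_mulVec_nonneg (Sum.elim x y)
  rw [star_trivial, sub_mulVec, dotProduct_sub, sumElim_dotProduct_fromBlocks_mulVec_sumElim,
    sumElim_dotProduct_fromBlocks_mulVec_sumElim] at hform
  simp only [add_mulVec, neg_mulVec, smul_mulVec, one_mulVec, zero_mulVec, dotProduct_add,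
    dotProduct_neg, dotProduct_smul, dotProduct_zero, smul_eq_mul,
    dotProduct_transpose_mulVec] at hform ⊢
  rw [dotProduct_comm y x] at hform
  linarith

/-- dissipativity part of Lemma 1. If `Σ(A_n, I, I)` is
`(−R_n, −S_nᵀ, −Q_n)`-ssd(`κ_n`), i.e. the block matrix
`[[−R_n, −S_nᵀ],[−S_n, −Q_n]] − [[A_n + A_nᵀ + κ_n I, I],[I, 0]]` is positive semidefinite,
and `ψ` is statically `(Q_n,S_n,R_n)`-dissipative against `ε_n`, then
`ε_nᵀ(A_n + A_nᵀ)ε_n + 2ε_nᵀψ + 2ε_nᵀ(A_no ε_o) ≤ −κ_n‖ε_n‖² + 2ε_nᵀ(A_no ε_o)`. -/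
theorem stmt_1 (p m : ℕ) (εn ψ : EuclideanSpace ℝ (Fin p)) (εo : Fin m → ℝ)
    (An Qn Sn Rn : Matrix (Fin p) (Fin p) ℝ) (Ano : Matrix (Fin p) (Fin m) ℝ) (κn : ℝ)
    (h1 : (fromBlocks (-Rn) (-Snᵀ) (-Sn) (-Qn) -
        fromBlocks (An + Anᵀ + κn • (1 : Matrix (Fin p) (Fin p) ℝ))
          (1 : Matrix (Fin p) (Fin p) ℝ) (1 : Matrix (Fin p) (Fin p) ℝ)
          (0 : Matrix (Fin p) (Fin p) ℝ)).PosSemidef)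
    (h2 : 0 ≤ ψ ⬝ᵥ (Qn *ᵥ ψ) + 2 * (ψ ⬝ᵥ (Sn *ᵥ εn)) + εn ⬝ᵥ (Rn *ᵥ εn)) :
    εn ⬝ᵥ ((An + Anᵀ) *ᵥ εn) + 2 * (εn ⬝ᵥ ψ) + 2 * (εn ⬝ᵥ (Ano *ᵥ εo)) ≤
      -κn * ‖εn‖ ^ 2 + 2 * (εn ⬝ᵥ (Ano *ᵥ εo)) := by
  have hnorm : ‖εn‖ ^ 2 = εn ⬝ᵥ εn := by
    rw [← real_inner_self_eq_norm_sq, EuclideanSpace.inner_eq_star_dotProduct, star_trivial]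
  have hsupply := ssd_supply_rate_le h1 εn ψ
  rw [hnorm]
  linarith
end

section
/- Let κ, κ_o, κ_n, β, λ_on, λ_no be reals with κ > 0, β ≥ 0, λ_on ≥ 0, λ_no ≥ 0, κ_o > λ_no + βλ_on + κ and κ_n > λ_no + βλ_on + κ. Let ε_o : [0,∞) → ℝᵐ and ε_n : [0,∞) → ℝᵖ be functions, and let σ_o, S_n : [0,∞) → ℝ be differentiable functions such that for all t ≥ 0: σ_o(t) ≥ ‖ε_o(t)‖², S_n(t) = ‖ε_n(t)‖², σ_o′(t) ≤ −κ_o σ_o(t) + 2βλ_on‖ε_o(t)‖‖ε_n(t)‖, and S_n′(t) ≤ −κ_n S_n(t) + 2λ_no‖ε_o(t)‖‖ε_n(t)‖. Then for all t ≥ 0: ‖ε_o(t)‖² + ‖ε_n(t)‖² ≤ σ_o(t) + S_n(t) ≤ (σ_o(0) + ‖ε_n(0)‖²) e^{−κ t}. -/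
/-! The cross terms are absorbed by `2ab ≤ a² + b² ≤ σ_o + S_n`; the gain margins then leave a
decay rate `κ` for the total storage `σ_o + S_n`, and Grönwall's inequality integrates it. -/

open Set Real

theorem add_le_neg_mul_add_of_cross_coupled {x y x' y' a b κ κx κy cx cy : ℝ}
    (hcx : 0 ≤ cx) (hcy : 0 ≤ cy) (hκx : cx + cy + κ ≤ κx) (hκy : cx + cy + κ ≤ κy)
    (ha : a ^ 2 ≤ x) (hb : b ^ 2 ≤ y)
    (hx' : x' ≤ -κx * x + 2 * cx * a * b) (hy' : y' ≤ -κy * y + 2 * cy * a * b) :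
    x' + y' ≤ -κ * (x + y) := by
  have hab : 2 * a * b ≤ x + y := by nlinarith [sq_nonneg (a - b)]
  have hx : 0 ≤ x := (sq_nonneg a).trans ha
  have hy : 0 ≤ y := (sq_nonneg b).trans hb
  nlinarith [mul_le_mul_of_nonneg_left hab (add_nonneg hcx hcy),
    mul_nonneg (sub_nonneg.2 hκx) hx, mul_nonneg (sub_nonneg.2 hκy) hy]

theorem le_mul_exp_of_hasDerivWithinAt_le_neg_mul {f f' : ℝ → ℝ} {κ a : ℝ}
    (hf : ∀ t ∈ Ici a, HasDerivWithinAt f (f' t) (Ici a) t)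
    (hbound : ∀ t ∈ Ici a, f' t ≤ -κ * f t) :
    ∀ t ∈ Ici a, f t ≤ f a * exp (-κ * (t - a)) := by
  intro t ht
  have hcont : ContinuousOn f (Icc a t) := fun s hs =>
    ((hf s hs.1).continuousWithinAt).mono Icc_subset_Ici_self
  have hright : ∀ s ∈ Ico a t, HasDerivWithinAt f (f' s) (Ici s) s := fun s hs =>
    (hf s hs.1).mono (Ici_subset_Ici.2 hs.1)
  have := le_gronwallBound_of_liminf_deriv_right_le hcont
    (fun s hs _ hr => (hright s hs).liminf_right_slope_le hr) le_rfl
    (fun s hs => (hbound s hs.1).trans_eq (add_zero _).symm) t ⟨ht, le_rfl⟩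
  rwa [gronwallBound_ε0] at this

theorem stmt_12_general (m p : ℕ) (κ κo κn β lon lno : ℝ)
    (hβ : 0 ≤ β) (hlon : 0 ≤ lon) (hlno : 0 ≤ lno)
    (hκo : lno + β * lon + κ < κo) (hκn : lno + β * lon + κ < κn)
    (εo : ℝ → EuclideanSpace ℝ (Fin m)) (εn : ℝ → EuclideanSpace ℝ (Fin p))
    (σo Sn σo' Sn' : ℝ → ℝ)
    (hσo_deriv : ∀ t ∈ Set.Ici (0 : ℝ), HasDerivWithinAt σo (σo' t) (Set.Ici (0 : ℝ)) t)
    (hSn_deriv : ∀ t ∈ Set.Ici (0 : ℝ), HasDerivWithinAt Sn (Sn' t) (Set.Ici (0 : ℝ)) t)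
    (hmaj : ∀ t ∈ Set.Ici (0 : ℝ), ‖εo t‖ ^ 2 ≤ σo t)
    (hSn : ∀ t ∈ Set.Ici (0 : ℝ), Sn t = ‖εn t‖ ^ 2)
    (hσo' : ∀ t ∈ Set.Ici (0 : ℝ), σo' t ≤ -κo * σo t + 2 * β * lon * ‖εo t‖ * ‖εn t‖)
    (hSn' : ∀ t ∈ Set.Ici (0 : ℝ), Sn' t ≤ -κn * Sn t + 2 * lno * ‖εo t‖ * ‖εn t‖) :
    ∀ t ∈ Set.Ici (0 : ℝ),
      ‖εo t‖ ^ 2 + ‖εn t‖ ^ 2 ≤ σo t + Sn t ∧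
      σo t + Sn t ≤ (σo 0 + ‖εn 0‖ ^ 2) * Real.exp (-κ * t) := by
  have hrate : ∀ t ∈ Ici (0 : ℝ), σo' t + Sn' t ≤ -κ * (σo t + Sn t) := fun t ht =>
    add_le_neg_mul_add_of_cross_coupled (κx := κo) (κy := κn) (mul_nonneg hβ hlon) hlno
      (by linarith) (by linarith)
      (hmaj t ht) (hSn t ht).ge ((hσo' t ht).trans_eq (by ring)) (hSn' t ht)
  have hdecay := le_mul_exp_of_hasDerivWithinAt_le_neg_mul
    (fun t ht => (hσo_deriv t ht).add (hSn_deriv t ht)) hrate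
  intro t ht
  refine ⟨add_le_add (hmaj t ht) (hSn t ht).ge, ?_⟩
  simpa only [Pi.add_apply, hSn 0 self_mem_Ici, sub_zero] using hdecay t ht

/-- exponential convergence, Theorem 1. Under the gain conditions
`κ_o, κ_n > λ_no + βλ_on + κ` with `κ > 0`, if `σ_o ≥ ‖ε_o‖²` majorizes the measured-error
storage and `S_n = ‖ε_n‖²`, with
`σ_o′ ≤ −κ_o σ_o + 2βλ_on‖ε_o‖‖ε_n‖` and `S_n′ ≤ −κ_n S_n + 2λ_no‖ε_o‖‖ε_n‖` on `[0,∞)`,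
then `‖ε_o(t)‖² + ‖ε_n(t)‖² ≤ σ_o(t) + S_n(t) ≤ (σ_o(0) + ‖ε_n(0)‖²)e^{−κt}` for `t ≥ 0`. -/
theorem stmt_12 (m p : ℕ) (κ κo κn β lon lno : ℝ)
    (hκ : 0 < κ) (hβ : 0 ≤ β) (hlon : 0 ≤ lon) (hlno : 0 ≤ lno)
    (hκo : lno + β * lon + κ < κo) (hκn : lno + β * lon + κ < κn)
    (εo : ℝ → EuclideanSpace ℝ (Fin m)) (εn : ℝ → EuclideanSpace ℝ (Fin p))
    (σo Sn σo' Sn' : ℝ → ℝ)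
    (hσo_deriv : ∀ t ∈ Set.Ici (0 : ℝ), HasDerivWithinAt σo (σo' t) (Set.Ici (0 : ℝ)) t)
    (hSn_deriv : ∀ t ∈ Set.Ici (0 : ℝ), HasDerivWithinAt Sn (Sn' t) (Set.Ici (0 : ℝ)) t)
    (hmaj : ∀ t ∈ Set.Ici (0 : ℝ), ‖εo t‖ ^ 2 ≤ σo t)
    (hSn : ∀ t ∈ Set.Ici (0 : ℝ), Sn t = ‖εn t‖ ^ 2)
    (hσo' : ∀ t ∈ Set.Ici (0 : ℝ), σo' t ≤ -κo * σo t + 2 * β * lon * ‖εo t‖ * ‖εn t‖)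
    (hSn' : ∀ t ∈ Set.Ici (0 : ℝ), Sn' t ≤ -κn * Sn t + 2 * lno * ‖εo t‖ * ‖εn t‖) :
    ∀ t ∈ Set.Ici (0 : ℝ),
      ‖εo t‖ ^ 2 + ‖εn t‖ ^ 2 ≤ σo t + Sn t ∧
      σo t + Sn t ≤ (σo 0 + ‖εn 0‖ ^ 2) * Real.exp (-κ * t) :=
  stmt_12_general m p κ κo κn β lon lno hβ hlon hlno hκo hκn εo εn σo Sn σo' Sn' hσo_deriv hSn_deriv
    hmaj hSn hσo' hSn'
end

section
/- Let α, γ, κ, w be real numbers with α > γ > 0, κ > 0, w ≥ 0, and set μ = (α−γ)/α and T_min = −ln(μ)/κ. Let (s_k)_{k∈ℕ} be a sequence of nonnegative reals and (Δ_k)_{k∈ℕ} a sequence of reals with Δ_k ≥ T_min for all k, such that s_{k+1} ≤ s_k e^{−κΔ_k} + γ w for all k. Then for all k ∈ ℕ: s_k ≤ α w + μ^k · max(s_0 − α w, 0). In particular, if s_0 ≤ α w then s_k ≤ α w for all k, and in general s_k − α w → 0 geometrically, so every s_k eventually enters and remains in [0, α w]. -/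
/-! Each dwell time `Δ_k ≥ T_min` makes the decay factor `e^{-κΔ_k}` at most `μ`, so the storage
function obeys the affine contraction `s_{k+1} ≤ μ s_k + γw`. Its fixed point is `αw`, because
`γ = (1 - μ) α`, and the excess `s_k - αw` over the fixed point is multiplied by at most `μ < 1`
at every jump. -/

open Filter Topology

lemma Real.exp_neg_mul_le_of_neg_log_div_le {κ μ Δ : ℝ} (hκ : 0 < κ) (hμ : 0 < μ)
    (hΔ : -Real.log μ / κ ≤ Δ) : Real.exp (-κ * Δ) ≤ μ := by
  rw [div_le_iff₀ hκ] at hΔ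
  calc Real.exp (-κ * Δ) ≤ Real.exp (Real.log μ) := Real.exp_le_exp.2 (by linarith)
    _ = μ := Real.exp_log hμ

lemma le_add_pow_mul_max_of_succ_le_mul_add {μ L : ℝ} (hμ : 0 ≤ μ) {s : ℕ → ℝ}
    (hs : ∀ k, s (k + 1) ≤ μ * s k + (1 - μ) * L) (k : ℕ) :
    s k ≤ L + μ ^ k * max (s 0 - L) 0 := by
  induction k with
  | zero =>
    rw [pow_zero, one_mul]
    linarith [le_max_left (s 0 - L) 0]
  | succ k ih =>
    calc s (k + 1) ≤ μ * s k + (1 - μ) * L := hs k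
      _ ≤ μ * (L + μ ^ k * max (s 0 - L) 0) + (1 - μ) * L := by gcongr
      _ = L + μ ^ (k + 1) * max (s 0 - L) 0 := by ring

lemma exists_forall_ge_le_add_of_le_add_pow_mul {μ L M : ℝ} (hμ₀ : 0 ≤ μ) (hμ₁ : μ < 1)
    {s : ℕ → ℝ} (hs : ∀ k, s k ≤ L + μ ^ k * M) {ε : ℝ} (hε : 0 < ε) :
    ∃ N, ∀ k ≥ N, s k ≤ L + ε := by
  have hlim : Tendsto (fun k ↦ μ ^ k * M) atTop (𝓝 0) := by
    simpa using (tendsto_pow_atTop_nhds_zero_of_lt_one hμ₀ hμ₁).mul_const M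
  obtain ⟨N, hN⟩ := (hlim.eventually_le_const hε).exists_forall_of_atTop
  exact ⟨N, fun k hk ↦ (hs k).trans (by linarith [hN k hk])⟩

theorem stmt_15_general (α γ κ w : ℝ) (hγ : 0 < γ) (hαγ : γ < α) (hκ : 0 < κ)
    (μ Tmin : ℝ) (hμ : μ = (α - γ) / α) (hTmin : Tmin = -Real.log μ / κ)
    (s : ℕ → ℝ) (Δ : ℕ → ℝ) (hs : ∀ k, 0 ≤ s k) (hΔ : ∀ k, Tmin ≤ Δ k)
    (hrec : ∀ k, s (k + 1) ≤ s k * Real.exp (-κ * Δ k) + γ * w) :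
    (∀ k : ℕ, s k ≤ α * w + μ ^ k * max (s 0 - α * w) 0) ∧
    (s 0 ≤ α * w → ∀ k : ℕ, s k ≤ α * w) ∧
    (∀ ε : ℝ, 0 < ε → ∃ N : ℕ, ∀ k ≥ N, s k ≤ α * w + ε) := by
  have hα : 0 < α := hγ.trans hαγ
  have hμ₀ : 0 < μ := hμ ▸ div_pos (by linarith) hα
  have hμ₁ : μ < 1 := by rw [hμ, div_lt_one hα]; linarith
  have hγ_eq : γ * w = (1 - μ) * (α * w) := by rw [hμ]; field_simp; ring
  have hcontr : ∀ k, s (k + 1) ≤ μ * s k + (1 - μ) * (α * w) := fun k ↦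
    calc s (k + 1) ≤ s k * Real.exp (-κ * Δ k) + γ * w := hrec k
      _ ≤ s k * μ + γ * w := by
        gcongr
        · exact hs k
        · exact Real.exp_neg_mul_le_of_neg_log_div_le hκ hμ₀ (hTmin ▸ hΔ k)
      _ = μ * s k + (1 - μ) * (α * w) := by rw [hγ_eq]; ring
  have hbound := le_add_pow_mul_max_of_succ_le_mul_add hμ₀.le hcontr
  refine ⟨hbound, fun h₀ k ↦ ?_, fun ε hε ↦
    exists_forall_ge_le_add_of_le_add_pow_mul hμ₀.le hμ₁ hbound hε⟩
  simpa [max_eq_right (sub_nonpos.2 h₀)] using hbound k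

/-- discrete-time ISS formulation of Theorem 2. With `μ = (α−γ)/α` and
`T_min = −ln(μ)/κ`, any nonnegative sequence satisfying `s_{k+1} ≤ s_k e^{−κΔ_k} + γw`
with dwell times `Δ_k ≥ T_min` obeys `s_k ≤ αw + μ^k·max(s_0 − αw, 0)` for all `k`;
in particular `s_0 ≤ αw` implies `s_k ≤ αw` for all `k`, and in general `s_k` eventually
enters and remains below any level `αw + ε` with `ε > 0`. -/
theorem stmt_15 (α γ κ w : ℝ) (hγ : 0 < γ) (hαγ : γ < α) (hκ : 0 < κ) (hw : 0 ≤ w)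
    (μ Tmin : ℝ) (hμ : μ = (α - γ) / α) (hTmin : Tmin = -Real.log μ / κ)
    (s : ℕ → ℝ) (Δ : ℕ → ℝ) (hs : ∀ k, 0 ≤ s k) (hΔ : ∀ k, Tmin ≤ Δ k)
    (hrec : ∀ k, s (k + 1) ≤ s k * Real.exp (-κ * Δ k) + γ * w) :
    (∀ k : ℕ, s k ≤ α * w + μ ^ k * max (s 0 - α * w) 0) ∧
    (s 0 ≤ α * w → ∀ k : ℕ, s k ≤ α * w) ∧
    (∀ ε : ℝ, 0 < ε → ∃ N : ℕ, ∀ k ≥ N, s k ≤ α * w + ε) :=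
  stmt_15_general α γ κ w hγ hαγ hκ μ Tmin hμ hTmin s Δ hs hΔ hrec
end
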